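/- arXiv:1101.3453 — 3 statements merged into one kernel-verified Lean document; each statement's English description precedes it below -/
import Mathlib

section
/- Shannon entropy is a join semivaluation on the lattice of partitions of a finite probability space: for all partitions X, Y, H(X ⊔ Y) ≤ H(X) + H(Y) − H(X ⊓ Y), where ⊔ is the common refinement and ⊓ is the coarsest common coarsening, and moreover X ⊑ Y implies H(X) ≤ H(Y). -/
open Finset

variable {σ : Type*} [Fintype σ] [DecidableEq σ]

/-- A probability distribution on a finite type. -/
def IsDist (μ : σ → ℝ) : Prop := (∀ x, 0 ≤ μ x) ∧ ∑ x, μ x = 1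

/-- `Refines X Y` : `X ⊑ Y`, i.e. every block of `Y` is contained in some block of `X`. -/
def Refines (X Y : Finpartition (univ : Finset σ)) : Prop :=
  ∀ B ∈ Y.parts, ∃ C ∈ X.parts, B ⊆ C

/-- The common refinement (the paper's join `X ⊔ Y`). -/
def pJoin (X Y : Finpartition (univ : Finset σ)) : Finpartition (univ : Finset σ) := X ⊓ Y

/-- The setoid associated to a finpartition. -/
def toSetoid (X : Finpartition (univ : Finset σ)) : Setoid σ where
  r x y := ∃ B ∈ X.parts, x ∈ B ∧ y ∈ B
  iseqv := by
    constructor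
    · intro x
      obtain ⟨B, hB, hx⟩ := X.exists_mem (mem_univ x)
      exact ⟨B, hB, hx, hx⟩
    · rintro x y ⟨B, hB, hx, hy⟩; exact ⟨B, hB, hy, hx⟩
    · rintro x y z ⟨B, hB, hx, hy⟩ ⟨C, hC, hy', hz⟩
      exact ⟨B, hB, hx, X.eq_of_mem_parts hC hB hy' hy ▸ hz⟩

/-- The coarsest common coarsening (the paper's meet `X ⊓ Y`). -/
noncomputable def pMeet (X Y : Finpartition (univ : Finset σ)) : Finpartition (univ : Finset σ) :=
  letI : DecidableRel (toSetoid X ⊔ toSetoid Y).r := Classical.decRel _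
  Finpartition.ofSetoid (toSetoid X ⊔ toSetoid Y)

/-- Sum of the `n` largest `μ`-probabilities among the elements of `B`. -/
def gGuess (μ : σ → ℝ) (n : ℕ) (B : Finset σ) : ℝ :=
  (B.powerset.filter fun S => S.card ≤ n).sup' ⟨∅, by simp⟩ fun S => ∑ x ∈ S, μ x

/-- Expected probability of guessing in `n` tries given partition `X`. -/
def GGuess (μ : σ → ℝ) (n : ℕ) (X : Finpartition (univ : Finset σ)) : ℝ :=
  ∑ B ∈ X.parts, gGuess μ n B

/-- Expected number of guesses for a block `B` (elements asked in order of
decreasing probability, i.e. the ordering minimising the expected rank). -/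
noncomputable def NGset (μ : σ → ℝ) (B : Finset σ) : ℝ :=
  ⨅ e : B ≃ Fin B.card, ∑ x ∈ B.attach, ((e x : ℕ) + 1 : ℝ) * μ x

/-- Expected number of guesses given a partition. -/
noncomputable def NGpart (μ : σ → ℝ) (X : Finpartition (univ : Finset σ)) : ℝ :=
  ∑ B ∈ X.parts, NGset μ B

/-- Shannon entropy (base 2) of the block distribution induced by `μ` on `X`. -/
noncomputable def entropy (μ : σ → ℝ) (X : Finpartition (univ : Finset σ)) : ℝ :=
  - ∑ B ∈ X.parts, (∑ x ∈ B, μ x) * Real.logb 2 (∑ x ∈ B, μ x)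

/-- Conditional entropy `H(X|Y) = H(X ⊔ Y) - H(Y)`. -/
noncomputable def condEntropy (μ : σ → ℝ) (X Y : Finpartition (univ : Finset σ)) : ℝ :=
  entropy μ (pJoin X Y) - entropy μ Y

/-- Mutual information `I(X;Y) = H(X) + H(Y) - H(X ⊔ Y)`. -/
noncomputable def mutualInfo (μ : σ → ℝ) (X Y : Finpartition (univ : Finset σ)) : ℝ :=
  entropy μ X + entropy μ Y - entropy μ (pJoin X Y)

/-- Maximum probability in a block. -/
noncomputable def fmax (μ : σ → ℝ) (B : Finset σ) : ℝ := WithBot.unbotD 0 ((B.image μ).max)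

/-- Min-entropy leakage of a partition. -/
noncomputable def MEleak (μ : σ → ℝ) (X : Finpartition (univ : Finset σ)) : ℝ :=
  Real.logb 2 (∑ B ∈ X.parts, fmax μ B) - Real.logb 2 (fmax μ (univ : Finset σ))

/-- Kernel partition of a function on a finite type. -/
def kerP {O : Type*} [DecidableEq O] (f : σ → O) : Finpartition (univ : Finset σ) :=
  letI : DecidableRel (Setoid.ker f).r := fun a b => decEq (f a) (f b)
  Finpartition.ofSetoid (Setoid.ker f)

/-! With `entropy μ P = (∑ B ∈ P.parts, negMulLog (μ B)) / log 2`, both claims are inequalities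
between sums of `negMulLog`. Monotonicity is subadditivity of `negMulLog` on `[0, ∞)`, applied to
each block of the coarser partition cut along the finer one. For the semivaluation inequality any
partition `Z` coarser than `X` and `Y` will do: inside a block `C` of `Z` the masses
`μ (A ∩ B ∩ C)` form a nonnegative matrix whose row and column sums are the masses of the blocks
of `X` and of `Y` inside `C`, and `H(X ⊔ Y) + H(Z) ≤ H(X) + H(Y)` on `C` says that the mutual
information of this matrix is nonnegative, which is Gibbs' inequality. -/

namespace Real

theorem negMulLog_add_mul_log_le {a r c M : ℝ} (ha : 0 ≤ a) (hr : a ≤ r) (hc : a ≤ c)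
    (hM : a ≤ M) : negMulLog a + a * (log r + log c - log M) ≤ r * c / M - a := by
  rcases ha.eq_or_lt with rfl | ha
  · simpa using div_nonneg (mul_nonneg hr hc) hM
  have hr0 := ha.trans_le hr
  have hc0 := ha.trans_le hc
  have hM0 := ha.trans_le hM
  have hq : 0 < r * c / M := by positivity
  have hlog := log_le_sub_one_of_pos (div_pos hq ha)
  rw [log_div hq.ne' ha.ne', log_div (by positivity) hM0.ne', log_mul hr0.ne' hc0.ne'] at hlog
  calc negMulLog a + a * (log r + log c - log M) = a * (log r + log c - log M - log a) := by
        rw [negMulLog]; ring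
    _ ≤ a * (r * c / M / a - 1) := mul_le_mul_of_nonneg_left hlog ha.le
    _ = r * c / M - a := by field_simp

theorem negMulLog_sum_le_sum_negMulLog {ι : Type*} (s : Finset ι) (a : ι → ℝ)
    (ha : ∀ i ∈ s, 0 ≤ a i) : negMulLog (∑ i ∈ s, a i) ≤ ∑ i ∈ s, negMulLog (a i) := by
  simp only [negMulLog, neg_mul, sum_mul, ← sum_neg_distrib]
  refine sum_le_sum fun i hi => neg_le_neg ?_
  rcases (ha i hi).eq_or_lt with h0 | hpos
  · simp [← h0]
  · exact mul_le_mul_of_nonneg_left (log_le_log hpos (single_le_sum ha hi)) hpos.le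

theorem sum_sum_negMulLog_add_negMulLog_le {ι κ : Type*} (s : Finset ι) (t : Finset κ)
    (a : ι → κ → ℝ) (ha : ∀ i ∈ s, ∀ j ∈ t, 0 ≤ a i j) :
    ∑ i ∈ s, ∑ j ∈ t, negMulLog (a i j) + negMulLog (∑ i ∈ s, ∑ j ∈ t, a i j) ≤
      ∑ i ∈ s, negMulLog (∑ j ∈ t, a i j) + ∑ j ∈ t, negMulLog (∑ i ∈ s, a i j) := by
  set r := fun i => ∑ j ∈ t, a i j
  set c := fun j => ∑ i ∈ s, a i j
  set M := ∑ i ∈ s, r i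
  have hr : ∀ i ∈ s, ∀ j ∈ t, a i j ≤ r i := fun i hi j hj => single_le_sum (ha i hi) hj
  have hc : ∀ i ∈ s, ∀ j ∈ t, a i j ≤ c j :=
    fun i hi j hj => single_le_sum (fun i' hi' => ha i' hi' j hj) hi
  have hM : ∀ i ∈ s, ∀ j ∈ t, a i j ≤ M := fun i hi j hj =>
    (hr i hi j hj).trans (single_le_sum (fun i' hi' => sum_nonneg (ha i' hi')) hi)
  have hcM : ∑ j ∈ t, c j = M := sum_comm
  -- Gibbs' inequality against the product distribution `r i * c j / M`.
  have gibbs := sum_le_sum fun i hi => sum_le_sum fun j hj =>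
    negMulLog_add_mul_log_le (ha i hi j hj) (hr i hi j hj) (hc i hi j hj) (hM i hi j hj)
  have hproduct : ∑ i ∈ s, ∑ j ∈ t, (r i * c j / M - a i j) = 0 := by
    simp only [sum_sub_distrib, ← sum_div, ← mul_sum, ← sum_mul, hcM]
    rw [mul_self_div_self]
    exact sub_self _
  have hexpand : ∑ i ∈ s, ∑ j ∈ t, a i j * (log (r i) + log (c j) - log M) =
      ∑ i ∈ s, r i * log (r i) + ∑ j ∈ t, c j * log (c j) - M * log M := by
    simp only [mul_add, mul_sub, sum_add_distrib, sum_sub_distrib, ← sum_mul]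
    rw [sum_comm (f := fun i j => a i j * log (c j))]
    simp only [← sum_mul]
    rfl
  simp only [sum_add_distrib, hproduct, hexpand] at gibbs
  simp only [negMulLog, neg_mul, sum_neg_distrib, r, c, M] at gibbs ⊢
  linarith

end Real

open Real

namespace Finpartition

variable {α : Type*} [DecidableEq α] {s : Finset α}

theorem sum_parts_inter_of_subset (P : Finpartition s) {S C : Finset α} (hC : C ∈ P.parts)
    (hS : S ⊆ C) {M : Type*} [AddCommMonoid M] (f : Finset α → M) (hf : f ∅ = 0) :
    ∑ D ∈ P.parts, f (S ∩ D) = f S := by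
  rw [sum_eq_single C, inter_eq_left.2 hS]
  · intro D hD hDC
    have hSD : Disjoint S D := (P.disjoint hC hD (Ne.symm hDC)).mono_left hS
    rw [disjoint_iff_inter_eq_empty.1 hSD, hf]
  · exact fun h => absurd hC h

theorem sum_parts_sum_inter (P : Finpartition s) {S : Finset α} (hS : S ⊆ s) {M : Type*}
    [AddCommMonoid M] (f : α → M) : ∑ B ∈ P.parts, ∑ x ∈ S ∩ B, f x = ∑ x ∈ S, f x := by
  have hdisj : (P.parts : Set (Finset α)).PairwiseDisjoint (S ∩ ·) := fun B hB B' hB' hne =>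
    (P.disjoint hB hB' hne).mono inter_subset_right inter_subset_right
  rw [← sum_biUnion hdisj, ← inter_biUnion,
    show P.parts.biUnion (fun B => B) = s from P.biUnion_parts, inter_eq_left.2 hS]

theorem sum_parts_inf (P Q : Finpartition s) {M : Type*} [AddCommMonoid M]
    (f : Finset α → M) (hf : f ∅ = 0) :
    ∑ D ∈ (P ⊓ Q).parts, f D = ∑ A ∈ P.parts, ∑ B ∈ Q.parts, f (A ∩ B) := by
  have hdisj : ((P.parts ×ˢ Q.parts : Finset _) : Set (Finset α × Finset α)).PairwiseDisjoint
      fun p => p.1 ⊓ p.2 := by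
    rintro ⟨A, B⟩ hp ⟨A', B'⟩ hp' hne
    simp only [coe_product, Set.mem_prod, mem_coe] at hp hp'
    by_cases hA : A = A'
    · subst hA
      exact (Q.disjoint hp.2 hp'.2 fun h => hne (h ▸ rfl)).mono inf_le_right inf_le_right
    · exact (P.disjoint hp.1 hp'.1 hA).mono inf_le_left inf_le_left
  rw [parts_inf, sum_erase (a := ⊥) _ hf, sum_image_of_disjoint hf hdisj, sum_product]
  rfl

end Finpartition

section Entropy

variable {σ : Type*} [Fintype σ] [DecidableEq σ] {μ : σ → ℝ}
  {X Y Z : Finpartition (univ : Finset σ)}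

theorem entropy_eq_sum_negMulLog_div :
    entropy μ X = (∑ B ∈ X.parts, negMulLog (∑ x ∈ B, μ x)) / log 2 := by
  rw [entropy, sum_div, ← sum_neg_distrib]
  exact sum_congr rfl fun _ _ => by rw [negMulLog, logb]; ring

theorem refines_pMeet_of_le (h : toSetoid Z ≤ toSetoid X ⊔ toSetoid Y) :
    Refines (pMeet X Y) Z := by
  classical
  intro A hA
  obtain ⟨x, hx⟩ := Z.nonempty_of_mem_parts hA
  refine ⟨(pMeet X Y).part x, (pMeet X Y).part_mem.2 (mem_univ x), fun y hy => ?_⟩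
  exact Finpartition.mem_part_ofSetoid_iff_rel.2 (h ⟨A, hA, hx, hy⟩)

theorem sum_parts_negMulLog_inter (hZX : Refines Z X) {S A : Finset σ}
    (hA : A ∈ X.parts) (hS : S ⊆ A) :
    ∑ C ∈ Z.parts, negMulLog (∑ x ∈ S ∩ C, μ x) = negMulLog (∑ x ∈ S, μ x) := by
  obtain ⟨C, hC, hAC⟩ := hZX A hA
  exact Z.sum_parts_inter_of_subset hC (hS.trans hAC) (fun T => negMulLog (∑ x ∈ T, μ x))
    (by simp)

theorem sum_parts_negMulLog_mono (hμ : ∀ x, 0 ≤ μ x) (h : Refines X Y) :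
    ∑ A ∈ X.parts, negMulLog (∑ x ∈ A, μ x) ≤ ∑ B ∈ Y.parts, negMulLog (∑ x ∈ B, μ x) :=
  calc ∑ A ∈ X.parts, negMulLog (∑ x ∈ A, μ x)
      = ∑ A ∈ X.parts, negMulLog (∑ B ∈ Y.parts, ∑ x ∈ A ∩ B, μ x) := by
        simp only [Y.sum_parts_sum_inter (subset_univ _)]
    _ ≤ ∑ A ∈ X.parts, ∑ B ∈ Y.parts, negMulLog (∑ x ∈ A ∩ B, μ x) :=
        sum_le_sum fun A _ => negMulLog_sum_le_sum_negMulLog _ _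
          fun B _ => sum_nonneg fun x _ => hμ x
    _ = ∑ B ∈ Y.parts, negMulLog (∑ x ∈ B, μ x) := by
        rw [sum_comm]
        refine sum_congr rfl fun B hB => ?_
        simp only [inter_comm _ B]
        exact sum_parts_negMulLog_inter h hB subset_rfl

theorem entropy_mono (hμ : ∀ x, 0 ≤ μ x) (h : Refines X Y) : entropy μ X ≤ entropy μ Y := by
  simp only [entropy_eq_sum_negMulLog_div]
  exact div_le_div_of_nonneg_right (sum_parts_negMulLog_mono hμ h) (log_nonneg one_le_two)

theorem sum_sum_negMulLog_inter_add_le (hμ : ∀ x, 0 ≤ μ x) (C : Finset σ) :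
    ∑ A ∈ X.parts, ∑ B ∈ Y.parts, negMulLog (∑ x ∈ A ∩ B ∩ C, μ x) + negMulLog (∑ x ∈ C, μ x) ≤
      ∑ A ∈ X.parts, negMulLog (∑ x ∈ A ∩ C, μ x) +
        ∑ B ∈ Y.parts, negMulLog (∑ x ∈ B ∩ C, μ x) := by
  have hrow : ∀ A, ∑ B ∈ Y.parts, ∑ x ∈ A ∩ B ∩ C, μ x = ∑ x ∈ A ∩ C, μ x := fun A => by
    simp only [inter_right_comm A _ C]
    exact Y.sum_parts_sum_inter (subset_univ _) μ
  have hcol : ∀ B, ∑ A ∈ X.parts, ∑ x ∈ A ∩ B ∩ C, μ x = ∑ x ∈ B ∩ C, μ x := fun B => by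
    simp only [inter_comm _ B, inter_right_comm B _ C]
    exact X.sum_parts_sum_inter (subset_univ _) μ
  have htot : ∑ A ∈ X.parts, ∑ x ∈ A ∩ C, μ x = ∑ x ∈ C, μ x := by
    simp only [inter_comm _ C]
    exact X.sum_parts_sum_inter (subset_univ _) μ
  have := sum_sum_negMulLog_add_negMulLog_le X.parts Y.parts
    (fun A B => ∑ x ∈ A ∩ B ∩ C, μ x) fun A _ B _ => sum_nonneg fun x _ => hμ x
  simpa only [hrow, hcol, htot] using this

theorem sum_parts_negMulLog_inf_add_le (hμ : ∀ x, 0 ≤ μ x) (hZX : Refines Z X)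
    (hZY : Refines Z Y) :
    ∑ D ∈ (X ⊓ Y).parts, negMulLog (∑ x ∈ D, μ x) + ∑ C ∈ Z.parts, negMulLog (∑ x ∈ C, μ x) ≤
      ∑ A ∈ X.parts, negMulLog (∑ x ∈ A, μ x) + ∑ B ∈ Y.parts, negMulLog (∑ x ∈ B, μ x) := by
  have hinf : ∑ C ∈ Z.parts, ∑ A ∈ X.parts, ∑ B ∈ Y.parts, negMulLog (∑ x ∈ A ∩ B ∩ C, μ x) =
      ∑ D ∈ (X ⊓ Y).parts, negMulLog (∑ x ∈ D, μ x) := by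
    rw [X.sum_parts_inf Y _ (by simp), sum_comm]
    refine sum_congr rfl fun A hA => ?_
    rw [sum_comm]
    exact sum_congr rfl fun B _ => sum_parts_negMulLog_inter hZX hA inter_subset_left
  have hX : ∑ C ∈ Z.parts, ∑ A ∈ X.parts, negMulLog (∑ x ∈ A ∩ C, μ x) =
      ∑ A ∈ X.parts, negMulLog (∑ x ∈ A, μ x) := by
    rw [sum_comm]
    exact sum_congr rfl fun A hA => sum_parts_negMulLog_inter hZX hA subset_rfl
  have hY : ∑ C ∈ Z.parts, ∑ B ∈ Y.parts, negMulLog (∑ x ∈ B ∩ C, μ x) =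
      ∑ B ∈ Y.parts, negMulLog (∑ x ∈ B, μ x) := by
    rw [sum_comm]
    exact sum_congr rfl fun B hB => sum_parts_negMulLog_inter hZY hB subset_rfl
  calc _ = ∑ C ∈ Z.parts, (∑ A ∈ X.parts, ∑ B ∈ Y.parts, negMulLog (∑ x ∈ A ∩ B ∩ C, μ x) +
          negMulLog (∑ x ∈ C, μ x)) := by rw [sum_add_distrib, hinf]
    _ ≤ ∑ C ∈ Z.parts, (∑ A ∈ X.parts, negMulLog (∑ x ∈ A ∩ C, μ x) +
          ∑ B ∈ Y.parts, negMulLog (∑ x ∈ B ∩ C, μ x)) :=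
        sum_le_sum fun C _ => sum_sum_negMulLog_inter_add_le hμ C
    _ = _ := by rw [sum_add_distrib, hX, hY]

theorem entropy_pJoin_add_entropy_le (hμ : ∀ x, 0 ≤ μ x) (hZX : Refines Z X)
    (hZY : Refines Z Y) :
    entropy μ (pJoin X Y) + entropy μ Z ≤ entropy μ X + entropy μ Y := by
  simp only [entropy_eq_sum_negMulLog_div, pJoin, ← add_div]
  exact div_le_div_of_nonneg_right (sum_parts_negMulLog_inf_add_le hμ hZX hZY)
    (log_nonneg one_le_two)

end Entropy

theorem entropy_is_join_semivaluation (μ : σ → ℝ) (hμ : IsDist μ)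
    (X Y : Finpartition (univ : Finset σ)) :
    entropy μ (pJoin X Y) ≤ entropy μ X + entropy μ Y - entropy μ (pMeet X Y) ∧
    (Refines X Y → entropy μ X ≤ entropy μ Y) :=
  ⟨le_sub_iff_add_le.2 <| entropy_pJoin_add_entropy_le hμ.1
      (refines_pMeet_of_le le_sup_left) (refines_pMeet_of_le le_sup_right),
    entropy_mono hμ.1⟩
end

section
/- For partitions X and Y of a finite probability space, the entropy of their meet is at most the mutual information between them: H(X ⊓ Y) ≤ I(X; Y), where I(X;Y) = H(X) + H(Y) − H(X ⊔ Y). -/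
open Finset

variable {σ : Type*} [Fintype σ] [DecidableEq σ]

/-!
Write `P_W(x)` for the mass of the `W`-block of `x`, `Z = X ⊓ Y` and `J = X ⊔ Y`. Then
`H(Z) - I(X;Y) = ∑ₓ μ(x) log₂ q(x)` with `q = P_X P_Y / (P_Z P_J)`, and since `log t ≤ t - 1` it
suffices that `∑ₓ μ(x) q(x) ≤ 1`. Expand `P_X(x) P_Y(x)` over pairs `(a, b)` with `a ∈ X_x`,
`b ∈ Y_x` and sum over `x` first: the pair contributes `μ(a) μ(b) / P_Z(a)` times
`∑_{x ∈ X_a ∩ Y_b} μ(x) / μ(X_a ∩ Y_b) ≤ 1`, because `X_a ∩ Y_b` is the `J`-block of each of its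
points. Moreover `X_a ∩ Y_b` is empty unless `b ∈ Z_a`, so the total is at most
`∑_a μ(a) P_Z(a) / P_Z(a) ≤ 1`.
-/

namespace Finpartition

variable {α : Type*} [DecidableEq α] {s : Finset α} (P : Finpartition s)

lemma mem_part_comm {a b : α} : a ∈ P.part b ↔ b ∈ P.part a := by
  simp only [mem_part_iff_exists, and_comm]

lemma part_eq_part_of_mem {a b : α} (h : a ∈ P.part b) : P.part a = P.part b :=
  P.part_eq_of_mem (P.part_mem.2 (P.part_nonempty.1 ⟨a, h⟩)) h

lemma sum_parts_sum {M : Type*} [AddCommMonoid M] (f : α → M) :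
    ∑ B ∈ P.parts, ∑ x ∈ B, f x = ∑ x ∈ s, f x := by
  conv_rhs => rw [← P.biUnion_parts]
  exact (sum_biUnion P.disjoint).symm

end Finpartition

lemma sum_mul_logb_nonpos {ι : Type*} (s : Finset ι) {b : ℝ} (hb : 1 < b) {w q : ι → ℝ}
    (hw : ∀ i ∈ s, 0 ≤ w i) (hq : ∀ i ∈ s, 0 < w i → 0 < q i)
    (h : ∑ i ∈ s, w i * q i ≤ ∑ i ∈ s, w i) : ∑ i ∈ s, w i * Real.logb b (q i) ≤ 0 := by
  have hterm : ∀ i ∈ s, w i * Real.logb b (q i) ≤ (w i * q i - w i) / Real.log b := by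
    intro i hi
    rcases (hw i hi).eq_or_lt with h0 | hpos
    · simp [← h0]
    rw [Real.logb, ← mul_div_assoc]
    refine div_le_div_of_nonneg_right ?_ (Real.log_nonneg hb.le)
    linarith [mul_le_mul_of_nonneg_left (Real.log_le_sub_one_of_pos (hq i hi hpos)) hpos.le]
  calc ∑ i ∈ s, w i * Real.logb b (q i)
      ≤ ∑ i ∈ s, (w i * q i - w i) / Real.log b := sum_le_sum hterm
    _ = (∑ i ∈ s, w i * q i - ∑ i ∈ s, w i) / Real.log b := by rw [← sum_div, sum_sub_distrib]
    _ ≤ 0 := div_nonpos_of_nonpos_of_nonneg (sub_nonpos.2 h) (Real.log_nonneg hb.le)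

def blockMass (μ : σ → ℝ) (W : Finpartition (univ : Finset σ)) (x : σ) : ℝ :=
  ∑ y ∈ W.part x, μ y

lemma entropy_eq_neg_sum_mul_logb_blockMass (μ : σ → ℝ) (W : Finpartition (univ : Finset σ)) :
    entropy μ W = - ∑ x, μ x * Real.logb 2 (blockMass μ W x) := by
  rw [entropy, ← W.sum_parts_sum]
  congr 1
  refine sum_congr rfl fun B hB => ?_
  rw [sum_mul]
  refine sum_congr rfl fun x hx => ?_
  rw [blockMass, W.part_eq_of_mem hB hx]

section

variable {μ : σ → ℝ}

lemma blockMass_eq_of_mem {W : Finpartition (univ : Finset σ)} {a b : σ} (h : a ∈ W.part b) :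
    blockMass μ W a = blockMass μ W b := by
  rw [blockMass, W.part_eq_part_of_mem h, blockMass]

lemma blockMass_nonneg (hμ : ∀ x, 0 ≤ μ x) (W : Finpartition (univ : Finset σ)) (x : σ) :
    0 ≤ blockMass μ W x :=
  sum_nonneg fun y _ => hμ y

lemma blockMass_pos (hμ : ∀ x, 0 ≤ μ x) (W : Finpartition (univ : Finset σ)) {x : σ}
    (hx : 0 < μ x) : 0 < blockMass μ W x :=
  hx.trans_le (single_le_sum (fun y _ => hμ y) (W.mem_part (mem_univ x)))

end

section

variable (X Y : Finpartition (univ : Finset σ))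

lemma part_pJoin (x : σ) : (pJoin X Y).part x = X.part x ∩ Y.part x := by
  have hx : x ∈ X.part x ∩ Y.part x :=
    mem_inter.2 ⟨X.mem_part (mem_univ x), Y.mem_part (mem_univ x)⟩
  refine (pJoin X Y).part_eq_of_mem ?_ hx
  rw [pJoin, Finpartition.parts_inf]
  exact mem_erase.2 ⟨ne_empty_of_mem hx, mem_image.2 ⟨(X.part x, Y.part x),
    mem_product.2 ⟨X.part_mem.2 (mem_univ x), Y.part_mem.2 (mem_univ x)⟩, rfl⟩⟩

lemma part_subset_part_pMeet_left (x : σ) : X.part x ⊆ (pMeet X Y).part x := fun y hy => by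
  let : DecidableRel (toSetoid X ⊔ toSetoid Y).r := Classical.decRel _
  have hxy : toSetoid X x y := (X.mem_part_iff_exists.1 hy).imp fun _ => by tauto
  exact Finpartition.mem_part_ofSetoid_iff_rel.2 (Setoid.le_def.1 le_sup_left hxy)

lemma part_subset_part_pMeet_right (x : σ) : Y.part x ⊆ (pMeet X Y).part x := fun y hy => by
  let : DecidableRel (toSetoid X ⊔ toSetoid Y).r := Classical.decRel _
  have hxy : toSetoid Y x y := (Y.mem_part_iff_exists.1 hy).imp fun _ => by tauto
  exact Finpartition.mem_part_ofSetoid_iff_rel.2 (Setoid.le_def.1 le_sup_right hxy)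

lemma part_pJoin_eq_inter_of_mem {a b x : σ} (hx : x ∈ X.part a ∩ Y.part b) :
    (pJoin X Y).part x = X.part a ∩ Y.part b := by
  rw [mem_inter] at hx
  rw [part_pJoin, X.part_eq_part_of_mem hx.1, Y.part_eq_part_of_mem hx.2]

lemma mem_part_pMeet_of_inter_nonempty {a b : σ} (h : (X.part a ∩ Y.part b).Nonempty) :
    b ∈ (pMeet X Y).part a := by
  obtain ⟨x, hx⟩ := h
  rw [mem_inter, Y.mem_part_comm] at hx
  rw [← (pMeet X Y).part_eq_part_of_mem (part_subset_part_pMeet_left X Y a hx.1)]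
  exact part_subset_part_pMeet_right X Y x hx.2

lemma sum_sum_part_sum_part_comm {M : Type*} [AddCommMonoid M] (f : σ → σ → σ → M) :
    ∑ x, ∑ a ∈ X.part x, ∑ b ∈ Y.part x, f x a b =
      ∑ a, ∑ b, ∑ x ∈ X.part a ∩ Y.part b, f x a b := by
  rw [sum_comm' (s' := X.part) (t' := univ) fun x a => by
    simp only [mem_univ, true_and, and_true, X.mem_part_comm]]
  refine sum_congr rfl fun a _ => sum_comm' (t' := univ) fun x b => ?_
  simp only [mem_inter, mem_univ, and_true, Y.mem_part_comm]

variable {μ : σ → ℝ}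

lemma sum_div_blockMass_pJoin_le_one (a b : σ) :
    ∑ x ∈ X.part a ∩ Y.part b, μ x / blockMass μ (pJoin X Y) x ≤ 1 :=
  calc ∑ x ∈ X.part a ∩ Y.part b, μ x / blockMass μ (pJoin X Y) x
      = ∑ x ∈ X.part a ∩ Y.part b, μ x / ∑ y ∈ X.part a ∩ Y.part b, μ y :=
        sum_congr rfl fun x hx => by rw [blockMass, part_pJoin_eq_inter_of_mem X Y hx]
    _ ≤ 1 := by rw [← sum_div]; exact div_self_le_one _

lemma sum_mul_blockMass_ratio_le (hμ : ∀ x, 0 ≤ μ x) :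
    ∑ x, μ x * (blockMass μ X x * blockMass μ Y x /
      (blockMass μ (pMeet X Y) x * blockMass μ (pJoin X Y) x)) ≤ ∑ x, μ x := by
  set Z := pMeet X Y
  set J := pJoin X Y
  have hexpand : ∀ x, μ x * (blockMass μ X x * blockMass μ Y x /
      (blockMass μ Z x * blockMass μ J x)) =
      ∑ a ∈ X.part x, ∑ b ∈ Y.part x, μ a * μ b / blockMass μ Z a * (μ x / blockMass μ J x) := by
    intro x
    have hZ : ∀ a ∈ X.part x, blockMass μ Z a = blockMass μ Z x :=
      fun a ha => blockMass_eq_of_mem (part_subset_part_pMeet_left X Y x ha)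
    rw [sum_congr rfl fun a ha => by rw [hZ a ha], blockMass, blockMass, sum_mul_sum]
    simp only [sum_div, mul_sum]
    exact sum_congr rfl fun a _ => sum_congr rfl fun b _ => by ring
  have hfiber : ∀ a, ∑ b, μ a * μ b / blockMass μ Z a *
      ∑ x ∈ X.part a ∩ Y.part b, μ x / blockMass μ J x ≤
        ∑ b ∈ Z.part a, μ a * μ b / blockMass μ Z a := by
    intro a
    rw [← sum_subset (subset_univ (Z.part a)) fun b _ hb => by
      rw [not_nonempty_iff_eq_empty.1 (mt (mem_part_pMeet_of_inter_nonempty X Y) hb), sum_empty,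
        mul_zero]]
    refine sum_le_sum fun b _ =>
      mul_le_of_le_one_right ?_ (sum_div_blockMass_pJoin_le_one X Y a b)
    exact div_nonneg (mul_nonneg (hμ a) (hμ b)) (blockMass_nonneg hμ Z a)
  calc ∑ x, μ x * (blockMass μ X x * blockMass μ Y x / (blockMass μ Z x * blockMass μ J x))
      = ∑ a, ∑ b, μ a * μ b / blockMass μ Z a *
          ∑ x ∈ X.part a ∩ Y.part b, μ x / blockMass μ J x := by
        simp only [hexpand, sum_sum_part_sum_part_comm, mul_sum]
    _ ≤ ∑ a, ∑ b ∈ Z.part a, μ a * μ b / blockMass μ Z a := sum_le_sum fun a _ => hfiber a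
    _ = ∑ a, μ a * (blockMass μ Z a / blockMass μ Z a) := by
        simp only [blockMass, mul_div_assoc, ← mul_sum, ← sum_div]
    _ ≤ ∑ a, μ a := sum_le_sum fun a _ => mul_le_of_le_one_right (hμ a) (div_self_le_one _)

lemma entropy_pMeet_sub_mutualInfo (hμ : ∀ x, 0 ≤ μ x) :
    entropy μ (pMeet X Y) - mutualInfo μ X Y =
      ∑ x, μ x * Real.logb 2 (blockMass μ X x * blockMass μ Y x /
        (blockMass μ (pMeet X Y) x * blockMass μ (pJoin X Y) x)) := by
  have hterm : ∀ x, μ x * Real.logb 2 (blockMass μ X x * blockMass μ Y x /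
      (blockMass μ (pMeet X Y) x * blockMass μ (pJoin X Y) x)) =
      μ x * Real.logb 2 (blockMass μ X x) + μ x * Real.logb 2 (blockMass μ Y x) -
        μ x * Real.logb 2 (blockMass μ (pMeet X Y) x) -
        μ x * Real.logb 2 (blockMass μ (pJoin X Y) x) := by
    intro x
    rcases (hμ x).eq_or_lt with hx | hx
    · simp [← hx]
    have hpos := fun W => (blockMass_pos hμ W hx).ne'
    rw [Real.logb_div (mul_ne_zero (hpos X) (hpos Y)) (mul_ne_zero (hpos _) (hpos _)),
      Real.logb_mul (hpos X) (hpos Y), Real.logb_mul (hpos _) (hpos _)]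
    ring
  simp only [hterm, sum_add_distrib, sum_sub_distrib, mutualInfo,
    entropy_eq_neg_sum_mul_logb_blockMass]
  ring

end

theorem entropy_meet_le_mutualInfo (μ : σ → ℝ) (hμ : IsDist μ)
    (X Y : Finpartition (univ : Finset σ)) :
    entropy μ (pMeet X Y) ≤ mutualInfo μ X Y := by
  have hratio_pos : ∀ x ∈ univ, 0 < μ x → 0 < blockMass μ X x * blockMass μ Y x /
      (blockMass μ (pMeet X Y) x * blockMass μ (pJoin X Y) x) := fun x _ hx => by
    have hpos := fun W => blockMass_pos hμ.1 W hx
    exact div_pos (mul_pos (hpos X) (hpos Y)) (mul_pos (hpos _) (hpos _))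
  have hgibbs := sum_mul_logb_nonpos univ one_lt_two (fun x _ => hμ.1 x) hratio_pos
    (sum_mul_blockMass_ratio_le X Y hμ.1)
  rw [← entropy_pMeet_sub_mutualInfo X Y hμ.1] at hgibbs
  linarith
end

section
/- If two partitions X and Y of a finite set are incomparable in the refinement order, then there exist a probability distribution μ and a natural number n ≥ 1 with G_{n,μ}(X) < G_{n,μ}(Y), and also a distribution μ' and n' with G_{n',μ'}(Y) < G_{n',μ'}(X). -/
open Finset

variable {σ : Type*} [Fintype σ] [DecidableEq σ]

/-! A block `B` of `Y` that lies in no block of `X` contains two points `a`, `b` that `X` separates.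
Under the uniform distribution on `{a, b}`, one guess per block finds the secret with probability
`1` given `X` (each of `a`, `b` is the most likely element of its block) but only `1/2` given `Y`
(the block `B` forces a choice between them). -/

section gGuess

variable {α : Type*}

lemma gGuess_nonneg (μ : α → ℝ) (n : ℕ) (B : Finset α) : 0 ≤ gGuess μ n B :=
  le_of_eq_of_le sum_empty.symm <| le_sup' (fun S => ∑ x ∈ S, μ x) <| by simp

lemma le_gGuess (μ : α → ℝ) {n : ℕ} {B : Finset α} {a : α} (ha : a ∈ B) (hn : 1 ≤ n) :
    μ a ≤ gGuess μ n B :=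
  le_of_eq_of_le (sum_singleton μ a).symm <| le_sup' (fun S => ∑ x ∈ S, μ x) <| by simp [ha, hn]

lemma gGuess_one_le {μ : α → ℝ} {B : Finset α} {c : ℝ} (hc : 0 ≤ c) (h : ∀ x ∈ B, μ x ≤ c) :
    gGuess μ 1 B ≤ c := by
  refine sup'_le _ _ fun S hS => ?_
  obtain ⟨hSB, hS1⟩ := by simpa only [mem_filter, mem_powerset] using hS
  rcases S.eq_empty_or_nonempty with rfl | hS
  · simpa using hc
  · obtain ⟨x, rfl⟩ := card_eq_one.mp (hS1.antisymm hS.card_pos)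
    simpa using h x (singleton_subset_iff.mp hSB)

end gGuess

noncomputable def pairDist (a b : σ) : σ → ℝ := fun x =>
  if x ∈ ({a, b} : Finset σ) then 1 / 2 else 0

lemma isDist_pairDist {a b : σ} (hab : a ≠ b) : IsDist (pairDist a b) := by
  refine ⟨fun x => by unfold pairDist; split_ifs <;> norm_num, ?_⟩
  simp only [pairDist, sum_ite_mem, univ_inter, sum_const, card_pair hab]
  norm_num

lemma exists_separated_of_not_refines {X Y : Finpartition (univ : Finset σ)}
    (h : ¬ Refines X Y) :
    ∃ a b, (∃ B ∈ Y.parts, a ∈ B ∧ b ∈ B) ∧ ∀ C ∈ X.parts, a ∈ C → b ∉ C := by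
  simp only [Refines, not_forall, not_exists, not_and] at h
  obtain ⟨B, hB, hBX⟩ := h
  obtain ⟨a, ha⟩ := Y.nonempty_of_mem_parts hB
  obtain ⟨C, hC, haC⟩ := X.exists_mem (mem_univ a)
  obtain ⟨b, hb, hbC⟩ := not_subset.mp (hBX C hC)
  exact ⟨a, b, ⟨B, hB, ha, hb⟩, fun C' hC' haC' => X.eq_of_mem_parts hC hC' haC haC' ▸ hbC⟩

lemma GGuess_pairDist_le_of_mem {Y : Finpartition (univ : Finset σ)} {a b : σ} {B : Finset σ}
    (hB : B ∈ Y.parts) (ha : a ∈ B) (hb : b ∈ B) : GGuess (pairDist a b) 1 Y ≤ 1 / 2 := by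
  have hle : ∀ x, pairDist a b x ≤ 1 / 2 := fun x => by unfold pairDist; split_ifs <;> norm_num
  have hrest : ∀ C ∈ Y.parts, C ≠ B → gGuess (pairDist a b) 1 C = 0 := by
    refine fun C hC hCB => le_antisymm (gGuess_one_le le_rfl fun x hx => ?_) (gGuess_nonneg _ _ _)
    have hxa : x ≠ a := by rintro rfl; exact hCB (Y.eq_of_mem_parts hC hB hx ha)
    have hxb : x ≠ b := by rintro rfl; exact hCB (Y.eq_of_mem_parts hC hB hx hb)
    simp [pairDist, hxa, hxb]
  rw [GGuess, sum_eq_single_of_mem B hB hrest]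
  exact gGuess_one_le (by norm_num) fun x _ => hle x

lemma one_le_GGuess_pairDist {X : Finpartition (univ : Finset σ)} {a b : σ}
    (hsep : ∀ C ∈ X.parts, a ∈ C → b ∉ C) : 1 ≤ GGuess (pairDist a b) 1 X := by
  obtain ⟨Ca, hCa, haCa⟩ := X.exists_mem (mem_univ a)
  obtain ⟨Cb, hCb, hbCb⟩ := X.exists_mem (mem_univ b)
  have hCab : Ca ≠ Cb := by rintro rfl; exact hsep Ca hCa haCa hbCb
  have hpair : ({Ca, Cb} : Finset (Finset σ)) ⊆ X.parts := insert_subset hCa (by simpa using hCb)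
  calc (1 : ℝ) = pairDist a b a + pairDist a b b := by norm_num [pairDist]
    _ ≤ gGuess (pairDist a b) 1 Ca + gGuess (pairDist a b) 1 Cb :=
        add_le_add (le_gGuess _ haCa le_rfl) (le_gGuess _ hbCb le_rfl)
    _ = ∑ C ∈ {Ca, Cb}, gGuess (pairDist a b) 1 C := (sum_pair hCab).symm
    _ ≤ GGuess (pairDist a b) 1 X :=
        sum_le_sum_of_subset_of_nonneg hpair fun C _ _ => gGuess_nonneg _ _ _

lemma exists_GGuess_lt_of_not_refines {X Y : Finpartition (univ : Finset σ)}
    (h : ¬ Refines X Y) :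
    ∃ (μ : σ → ℝ) (n : ℕ), IsDist μ ∧ 1 ≤ n ∧ GGuess μ n Y < GGuess μ n X := by
  obtain ⟨a, b, ⟨B, hB, ha, hb⟩, hsep⟩ := exists_separated_of_not_refines h
  obtain ⟨C, hC, haC⟩ := X.exists_mem (mem_univ a)
  have hab : a ≠ b := by rintro rfl; exact hsep C hC haC haC
  refine ⟨pairDist a b, 1, isDist_pairDist hab, le_rfl, ?_⟩
  linarith [GGuess_pairDist_le_of_mem hB ha hb, one_le_GGuess_pairDist hsep]

theorem incomparable_guess_prob_both_ways (X Y : Finpartition (univ : Finset σ))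
    (hXY : ¬ Refines X Y) (hYX : ¬ Refines Y X) :
    (∃ (μ : σ → ℝ) (n : ℕ), IsDist μ ∧ 1 ≤ n ∧ GGuess μ n X < GGuess μ n Y) ∧
    (∃ (μ' : σ → ℝ) (n' : ℕ), IsDist μ' ∧ 1 ≤ n' ∧ GGuess μ' n' Y < GGuess μ' n' X) := by
  exact ⟨exists_GGuess_lt_of_not_refines hYX, exists_GGuess_lt_of_not_refines hXY⟩
end
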